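/- At z = 2 the staircase-polygon partition function admits the closed form: for all nonnegative integers n and j with 0 ≤ j ≤ n, C_n(2;j) = 2(2n+1)(j+1)²·catalan(n)·C(2n, n+j) / ((n+j+1)(n+j+2)); in particular C_n(2;0) = 2(2n+1)·catalan(n)²/(n+2). -/
import Mathlib

open Filter Real

/-- Partition function `C_n(z;j)` of a pair of mutually avoiding directed paths of length `2n`
(an adsorbing Dyck path below a directed path whose endpoint has height `2j+2`). -/
noncomputable def Cst (n j : ℕ) (z : ℝ) : ℝ :=
  ∑ m1 ∈ Finset.range (n + 1), ∑ m2 ∈ Finset.range (j + 1),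
    (((2 * (m2 : ℝ) + 1) * (2 * (m1 : ℝ) + 2 * j + 3) * ((m1 : ℝ) + m2 + j + 2) *
        ((m1 : ℝ) - m2 + j + 1)) /
      ((2 * (n : ℝ) + 1) * (2 * (n : ℝ) + 2) * (2 * (n : ℝ) + 3) ^ 2)) *
    (Nat.choose (2 * n + 3) (n + m2 + 2)) * (Nat.choose (2 * n + 3) (n + m1 + j + 3)) *
    (z - 1) ^ (m1 + m2)

/-- Partition function `Z_n^*(z;q) = Σ_{j=0}^{n} C_q(z;j)·C_{n−q}(z;j)` of grafted staircase
polygons constrained to pass through the visit `(q,0)`. -/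
noncomputable def Zstar (n q : ℕ) (z : ℝ) : ℝ :=
  ∑ j ∈ Finset.range (n + 1), Cst q j z * Cst (n - q) j z

/-- Staircase-polygon pressure `P_n^S(z;q) = log(1 − Z_n^*(z;q)/C_n(z;0))`. -/
noncomputable def PS (n q : ℕ) (z : ℝ) : ℝ :=
  Real.log (1 - Zstar n q z / Cst n 0 z)

lemma choose_symm_mid (n : ℕ) : (2*n+3).choose (n+2) = (2*n+3).choose (n+1) := by
  rw [← Nat.choose_symm (show n+2 ≤ 2*n+3 by omega)]
  congr 1
  omega

lemma L2 (n : ℕ) (α β : ℝ) (M : ℕ) (hM : M ≤ n + 1) :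
    ∑ m ∈ Finset.range (M+1),
        (α + β * (m:ℝ) * ((m:ℝ)+1)) * (2*(m:ℝ)+1) * ((2*n+3).choose (n+m+2) : ℝ)
      = (α * ((M:ℝ) - (n:ℝ) - 1)
          + β * ((M:ℝ)^3 - ((n:ℝ)-1)*(M:ℝ)^2 - (n:ℝ)*(M:ℝ) - ((n:ℝ)+1)*((n:ℝ)+2)))
            * ((2*n+3).choose (n+M+2) : ℝ)
        + ((n:ℝ)+2) * (α + β*((n:ℝ)+1)) * ((2*n+3).choose (n+1) : ℝ) := by
  induction M with
  | zero =>
      rw [Finset.sum_range_one]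
      rw [show n+0+2 = n+2 from by omega, choose_symm_mid n]
      push_cast
      ring
  | succ M ih =>
      rw [Finset.sum_range_succ, ih (by omega)]
      have h4 : ((2*n+3).choose (n+M+3) : ℝ) * ((n:ℝ)+(M:ℝ)+3)
          = ((2*n+3).choose (n+M+2) : ℝ) * ((n:ℝ)+1-(M:ℝ)) := by
        have c : (2*n+3).choose (n+M+2+1) * (n+M+2+1) = (2*n+3).choose (n+M+2) * (n+1-M) := by
          rw [Nat.choose_succ_right_eq]
          congr 1
          omega
        rw [show n+M+2+1 = n+M+3 from by omega] at c
        have c' := congrArg (Nat.cast : ℕ → ℝ) c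
        push_cast [Nat.cast_sub (show M ≤ n+1 from by omega)] at c'
        linarith [c']
      rw [show n+(M+1)+2 = n+M+3 from by omega]
      push_cast
      linear_combination (α + β*((M:ℝ)^2+2*(M:ℝ)+(n:ℝ)+2)) * h4

noncomputable def al (n j : ℕ) : ℝ :=
  -((j:ℝ)^3-((n:ℝ)-1)*(j:ℝ)^2-(n:ℝ)*(j:ℝ)-((n:ℝ)+1)*((n:ℝ)+2))
      * ((2*n+3).choose (n+j+2) : ℝ)
    - ((n:ℝ)+1)*((n:ℝ)+2)*((2*n+3).choose (n+1) : ℝ)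

noncomputable def bl (n j : ℕ) : ℝ :=
  ((j:ℝ)-(n:ℝ)-1) * ((2*n+3).choose (n+j+2) : ℝ)
    + ((n:ℝ)+2)*((2*n+3).choose (n+1) : ℝ)

lemma sumF (n j : ℕ) (hj : j ≤ n) :
    (∑ K ∈ Finset.range (n+2),
        (al n j + bl n j * (K:ℝ) * ((K:ℝ)+1)) * (2*(K:ℝ)+1) * ((2*n+3).choose (n+K+2) : ℝ))
      - (∑ K ∈ Finset.range (j+1),
        (al n j + bl n j * (K:ℝ) * ((K:ℝ)+1)) * (2*(K:ℝ)+1) * ((2*n+3).choose (n+K+2) : ℝ))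
      = ((2*n+3).choose (n+j+2) : ℝ) * ((2*n+3).choose (n+1) : ℝ)
          * ((n:ℝ)+2) * ((j:ℝ)+1)^2 * ((n:ℝ)+1-(j:ℝ)) := by
  rw [L2 n (al n j) (bl n j) (n+1) (le_refl _), L2 n (al n j) (bl n j) j (by omega)]
  rw [show n+(n+1)+2 = 2*n+3 from by omega, Nat.choose_self]
  simp only [al, bl]
  push_cast
  ring

lemma key (n j : ℕ) (hj : j ≤ n) :
    Cst n j 2 = ((2*n+3).choose (n+j+2) : ℝ) * ((2*n+3).choose (n+1) : ℝ)
        * ((n:ℝ)+2) * ((j:ℝ)+1)^2 * ((n:ℝ)+1-(j:ℝ))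
      / ((2*(n:ℝ)+1)*(2*(n:ℝ)+2)*(2*(n:ℝ)+3)^2) := by
  have step1 : Cst n j 2 = ∑ m1 ∈ Finset.range (n+1),
      (1/((2*(n:ℝ)+1)*(2*(n:ℝ)+2)*(2*(n:ℝ)+3)^2)) *
        ((al n j + bl n j * ((m1:ℝ)+(j:ℝ)+1) * (((m1:ℝ)+(j:ℝ)+1)+1))
          * (2*((m1:ℝ)+(j:ℝ)+1)+1) * ((2*n+3).choose (n+m1+j+3) : ℝ)) := by
    unfold Cst
    refine Finset.sum_congr rfl fun m1 _ => ?_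
    have e1 : (∑ m2 ∈ Finset.range (j + 1),
        (((2 * (m2 : ℝ) + 1) * (2 * (m1 : ℝ) + 2 * j + 3) * ((m1 : ℝ) + m2 + j + 2) *
            ((m1 : ℝ) - m2 + j + 1)) /
          ((2 * (n : ℝ) + 1) * (2 * (n : ℝ) + 2) * (2 * (n : ℝ) + 3) ^ 2)) *
        (Nat.choose (2 * n + 3) (n + m2 + 2)) * (Nat.choose (2 * n + 3) (n + m1 + j + 3)) *
        ((2:ℝ) - 1) ^ (m1 + m2))
        = ((2 * (m1 : ℝ) + 2 * j + 3) * ((2*n+3).choose (n+m1+j+3) : ℝ)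
            / ((2 * (n : ℝ) + 1) * (2 * (n : ℝ) + 2) * (2 * (n : ℝ) + 3) ^ 2)) *
          ∑ m2 ∈ Finset.range (j+1),
            ((((m1:ℝ)+(j:ℝ)+1)*((m1:ℝ)+(j:ℝ)+2)) + (-1) * (m2:ℝ) * ((m2:ℝ)+1))
              * (2*(m2:ℝ)+1) * ((2*n+3).choose (n+m2+2) : ℝ) := by
      rw [Finset.mul_sum]
      refine Finset.sum_congr rfl fun m2 _ => ?_
      norm_num
      ring
    rw [e1, L2 n (((m1:ℝ)+(j:ℝ)+1)*((m1:ℝ)+(j:ℝ)+2)) (-1) j (by omega)]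
    simp only [al, bl]
    ring
  rw [step1, ← Finset.mul_sum]
  have trunc : (∑ m1 ∈ Finset.range (n+1),
        ((al n j + bl n j * ((m1:ℝ)+(j:ℝ)+1) * (((m1:ℝ)+(j:ℝ)+1)+1))
          * (2*((m1:ℝ)+(j:ℝ)+1)+1) * ((2*n+3).choose (n+m1+j+3) : ℝ)))
      = ∑ m1 ∈ Finset.range (n-j+1),
        ((al n j + bl n j * ((m1:ℝ)+(j:ℝ)+1) * (((m1:ℝ)+(j:ℝ)+1)+1))
          * (2*((m1:ℝ)+(j:ℝ)+1)+1) * ((2*n+3).choose (n+m1+j+3) : ℝ)) := by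
    refine (Finset.sum_subset ?_ ?_).symm
    · intro x hx
      simp only [Finset.mem_range] at hx ⊢
      omega
    · intro x hx hnx
      simp only [Finset.mem_range] at hx hnx
      rw [Nat.choose_eq_zero_of_lt (by omega)]
      simp
  rw [trunc]
  have reidx : (∑ K ∈ Finset.range (n+2),
        (al n j + bl n j * (K:ℝ) * ((K:ℝ)+1)) * (2*(K:ℝ)+1) * ((2*n+3).choose (n+K+2) : ℝ))
      = (∑ K ∈ Finset.range (j+1),
          (al n j + bl n j * (K:ℝ) * ((K:ℝ)+1)) * (2*(K:ℝ)+1) * ((2*n+3).choose (n+K+2) : ℝ))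
        + ∑ m1 ∈ Finset.range (n-j+1),
        ((al n j + bl n j * ((m1:ℝ)+(j:ℝ)+1) * (((m1:ℝ)+(j:ℝ)+1)+1))
          * (2*((m1:ℝ)+(j:ℝ)+1)+1) * ((2*n+3).choose (n+m1+j+3) : ℝ)) := by
    rw [show n+2 = (j+1)+(n-j+1) from by omega, Finset.sum_range_add]
    congr 1
    refine Finset.sum_congr rfl fun m1 _ => ?_
    rw [show n+(j+1+m1)+2 = n+m1+j+3 from by omega]
    push_cast
    ring
  have hsum : (∑ m1 ∈ Finset.range (n-j+1),
        ((al n j + bl n j * ((m1:ℝ)+(j:ℝ)+1) * (((m1:ℝ)+(j:ℝ)+1)+1))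
          * (2*((m1:ℝ)+(j:ℝ)+1)+1) * ((2*n+3).choose (n+m1+j+3) : ℝ)))
      = ((2*n+3).choose (n+j+2) : ℝ) * ((2*n+3).choose (n+1) : ℝ)
          * ((n:ℝ)+2) * ((j:ℝ)+1)^2 * ((n:ℝ)+1-(j:ℝ)) := by
    rw [← sumF n j hj, reidx]
    ring
  rw [hsum]
  ring

lemma chainE (n j : ℕ) (hj : j ≤ n + 1) :
    (2*(n:ℝ)+1)*(2*(n:ℝ)+2)*(2*(n:ℝ)+3) * ((2*n).choose (n+j) : ℝ)
      = ((n:ℝ)+(j:ℝ)+1)*((n:ℝ)+(j:ℝ)+2)*((n:ℝ)+1-(j:ℝ)) * ((2*n+3).choose (n+j+2) : ℝ) := by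
  have c1 : (2*n+1) * (2*n).choose (n+j) = (2*n+1).choose (n+j+1) * (n+j+1) :=
    Nat.add_one_mul_choose_eq (2*n) (n+j)
  have c2 : (2*n+2) * (2*n+1).choose (n+j+1) = (2*n+2).choose (n+j+2) * (n+j+2) :=
    Nat.add_one_mul_choose_eq (2*n+1) (n+j+1)
  have c3 : (2*n+3) * (2*n+2).choose (n+j+2) = (2*n+3).choose (n+j+3) * (n+j+3) :=
    Nat.add_one_mul_choose_eq (2*n+2) (n+j+2)
  have c4 : (2*n+3).choose (n+j+3) * (n+j+3) = (2*n+3).choose (n+j+2) * (n+1-j) := by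
    have := Nat.choose_succ_right_eq (2*n+3) (n+j+2)
    rw [show n+j+2+1 = n+j+3 from by omega, show 2*n+3-(n+j+2) = n+1-j from by omega] at this
    exact this
  have r1 := congrArg (Nat.cast : ℕ → ℝ) c1
  have r2 := congrArg (Nat.cast : ℕ → ℝ) c2
  have r3 := congrArg (Nat.cast : ℕ → ℝ) c3
  have r4 := congrArg (Nat.cast : ℕ → ℝ) c4
  push_cast at r1 r2 r3
  push_cast [Nat.cast_sub (show j ≤ n+1 from hj)] at r4
  linear_combination ((2*(n:ℝ)+2)*(2*(n:ℝ)+3)) * r1 + (((n:ℝ)+j+1)*(2*(n:ℝ)+3)) * r2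
    + (((n:ℝ)+j+1)*((n:ℝ)+j+2)) * r3 + (((n:ℝ)+j+1)*((n:ℝ)+j+2)) * r4

lemma part1 (n j : ℕ) (hj : j ≤ n) :
    Cst n j 2 = 2 * (2 * (n : ℝ) + 1) * ((j : ℝ) + 1) ^ 2 * (catalan n) *
      (Nat.choose (2 * n) (n + j)) / (((n : ℝ) + j + 1) * ((n : ℝ) + j + 2)) := by
  rw [key n j hj]
  have E1 := chainE n j (by omega)
  have E2 := chainE n 0 (by omega)
  rw [show n+0 = n from by omega, show n+0+2 = n+2 from by omega, choose_symm_mid n] at E2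
  norm_num at E2
  have E3 : ((n:ℝ)+1) * (catalan n : ℝ) = ((2*n).choose n : ℝ) := by
    have h := succ_mul_catalan_eq_centralBinom n
    rw [Nat.centralBinom_eq_two_mul_choose] at h
    exact_mod_cast h
  have hjn : (j:ℝ) ≤ (n:ℝ) := by exact_mod_cast hj
  rw [div_eq_div_iff (by positivity) (by positivity)]
  have main2 : ((n:ℝ)+1)^2 *
      (((2*n+3).choose (n+j+2) : ℝ) * ((2*n+3).choose (n+1) : ℝ)
        * ((n:ℝ)+2) * ((j:ℝ)+1)^2 * ((n:ℝ)+1-(j:ℝ)) * (((n:ℝ)+j+1)*((n:ℝ)+j+2)))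
    = ((n:ℝ)+1)^2 *
      (2 * (2 * (n : ℝ) + 1) * ((j : ℝ) + 1) ^ 2 * (catalan n) * ((2*n).choose (n+j) : ℝ)
        * ((2*(n:ℝ)+1)*(2*(n:ℝ)+2)*(2*(n:ℝ)+3)^2)) := by
    linear_combination
      (-((j:ℝ)+1)^2 * ((2*(n:ℝ)+1)*(2*(n:ℝ)+2)*(2*(n:ℝ)+3)) * ((n:ℝ)+1) * (catalan n : ℝ)) * E1
      + (-((j:ℝ)+1)^2 * (((n:ℝ)+j+1)*((n:ℝ)+j+2)*((n:ℝ)+1-(j:ℝ))) * ((2*n+3).choose (n+j+2) : ℝ)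
          * ((2*(n:ℝ)+1)*(2*(n:ℝ)+2)*(2*(n:ℝ)+3))) * E3
      + (-((j:ℝ)+1)^2 * (((n:ℝ)+j+1)*((n:ℝ)+j+2)*((n:ℝ)+1-(j:ℝ))) * ((2*n+3).choose (n+j+2) : ℝ)) * E2
  exact mul_left_cancel₀ (by positivity) main2

/-- Closed form for the staircase-polygon partition function at `z = 2`:
`C_n(2;j) = 2(2n+1)(j+1)²·catalan(n)·C(2n, n+j)/((n+j+1)(n+j+2))`, and in particular
`C_n(2;0) = 2(2n+1)·catalan(n)²/(n+2)`. -/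
theorem staircase_partition_at_critical_point :
    (∀ n j : ℕ, j ≤ n →
      Cst n j 2 = 2 * (2 * (n : ℝ) + 1) * ((j : ℝ) + 1) ^ 2 * (catalan n) *
        (Nat.choose (2 * n) (n + j)) / (((n : ℝ) + j + 1) * ((n : ℝ) + j + 2))) ∧
    (∀ n : ℕ,
      Cst n 0 2 = 2 * (2 * (n : ℝ) + 1) * (catalan n : ℝ) ^ 2 / ((n : ℝ) + 2)) := by
  constructor
  · exact part1
  · intro n
    rw [part1 n 0 (Nat.zero_le n), show n+0 = n from by omega]
    have E3 : ((n:ℝ)+1) * (catalan n : ℝ) = ((2*n).choose n : ℝ) := by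
      have h := succ_mul_catalan_eq_centralBinom n
      rw [Nat.centralBinom_eq_two_mul_choose] at h
      exact_mod_cast h
    rw [div_eq_div_iff (by positivity) (by positivity)]
    push_cast
    linear_combination (-(2 * (2*(n:ℝ)+1) * ((n:ℝ)+2) * (catalan n : ℝ))) * E3
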